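/- arXiv:1901.07993 — 4 statements merged into one kernel-verified Lean document; each statement's English description precedes it below -/
import Mathlib

section
/- Let S be a Hermitian positive definite matrix partitioned as S = [[A, B],[B*, C]] with A and C square, and let Z_A, Z_C satisfy Z_A* A Z_A = I and Z_C* C Z_C = I. Define Z₀ = diag(Z_A, Z_C). Then ‖I - Z₀* S Z₀‖₂ < 1. -/
open Matrix
open scoped Matrix.Norms.L2Operator ComplexOrder

-- conjugation preserves PosDef
lemma my_posDef_conj {k : Type*} [Fintype k] [DecidableEq k]
    {M : Matrix k k ℂ} (hM : M.PosDef) {E : Matrix k k ℂ} (hE : IsUnit E) :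
    (Eᴴ * M * E).PosDef := by
  refine Matrix.PosDef.of_dotProduct_mulVec_pos (Matrix.isHermitian_conjTranspose_mul_mul E hM.1) fun x hx => ?_
  have hEx : E *ᵥ x ≠ 0 := by
    intro h
    exact hx <| (Matrix.mulVec_injective_iff_isUnit.mpr hE) (by simpa using h)
  simpa only [star_mulVec, dotProduct_mulVec, vecMul_vecMul] using hM.dotProduct_mulVec_pos hEx

lemma my_mem_spectrum_lt {k : Type*} [Fintype k] [DecidableEq k]
    {N : Matrix k k ℂ}
    (h1 : ((1 : Matrix k k ℂ) - N).PosDef) {μ : ℝ} (hμ : μ ∈ spectrum ℝ N) :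
    μ < 1 := by
  have h1' : (1 : ℝ) - μ ∈ spectrum ℝ ((1 : Matrix k k ℂ) - N) := by
    have := spectrum.singleton_sub_eq (R := ℝ) N 1
    rw [_root_.map_one] at this
    rw [← this]
    exact Set.sub_mem_sub rfl hμ
  rw [h1.1.spectrum_real_eq_range_eigenvalues] at h1'
  obtain ⟨i, hi⟩ := h1'
  have := h1.eigenvalues_pos i
  rw [hi] at this
  linarith

lemma my_norm_lt_one {k : Type*} [Fintype k] [DecidableEq k]
    {N : Matrix k k ℂ} (hN : N.IsHermitian)
    (h1 : ((1 : Matrix k k ℂ) - N).PosDef) (h2 : ((1 : Matrix k k ℂ) + N).PosDef) :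
    ‖N‖ < 1 := by
  have key : ∀ μ ∈ spectrum ℝ N, |μ| < 1 := by
    intro μ hμ
    have hlt := my_mem_spectrum_lt h1 hμ
    have hμ' : -μ ∈ spectrum ℝ (-N) := by
      rw [← spectrum.neg_eq]; exact Set.neg_mem_neg.mpr hμ
    have hgt := my_mem_spectrum_lt (by simpa [sub_neg_eq_add] using h2) hμ'
    rw [abs_lt]; constructor <;> linarith
  cases isEmpty_or_nonempty k
  · have h0 : N = 0 := Subsingleton.elim _ _
    simp [h0]
  · letI : CStarAlgebra (Matrix k k ℂ) := Matrix.instCStarAlgebra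
    have hsa : IsSelfAdjoint N := hN
    have hrad := hsa.toReal_spectralRadius_eq_norm
    obtain ⟨i₀, hmax⟩ := Finite.exists_max (fun i => |hN.eigenvalues i|)
    have hbound : spectralRadius ℝ N ≤ (‖hN.eigenvalues i₀‖₊ : ENNReal) := by
      apply iSup₂_le
      intro μ hμ
      rw [hN.spectrum_real_eq_range_eigenvalues] at hμ
      obtain ⟨i, rfl⟩ := hμ
      refine ENNReal.coe_le_coe.mpr ?_
      rw [← NNReal.coe_le_coe, coe_nnnorm, coe_nnnorm, Real.norm_eq_abs, Real.norm_eq_abs]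
      exact hmax i
    have : ‖N‖ ≤ |hN.eigenvalues i₀| := by
      rw [← hrad]
      calc (spectralRadius ℝ N).toReal ≤ ((‖hN.eigenvalues i₀‖₊ : ENNReal)).toReal :=
            ENNReal.toReal_mono ENNReal.coe_ne_top hbound
        _ = |hN.eigenvalues i₀| := by simp [Real.norm_eq_abs]
    exact lt_of_le_of_lt this (key _ (hN.eigenvalues_mem_spectrum_real i₀))

theorem stmt_6 {m n : Type*} [Fintype m] [Fintype n] [DecidableEq m] [DecidableEq n]
    (A : Matrix m m ℂ) (B : Matrix m n ℂ) (C : Matrix n n ℂ)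
    (ZA : Matrix m m ℂ) (ZC : Matrix n n ℂ)
    (S : Matrix (m ⊕ n) (m ⊕ n) ℂ)
    (hS : S = Matrix.fromBlocks A B Bᴴ C)
    (hSpd : S.PosDef)
    (hZA : ZAᴴ * A * ZA = 1) (hZC : ZCᴴ * C * ZC = 1)
    (Z₀ : Matrix (m ⊕ n) (m ⊕ n) ℂ)
    (hZ₀ : Z₀ = Matrix.fromBlocks ZA 0 0 ZC) :
    ‖(1 : Matrix (m ⊕ n) (m ⊕ n) ℂ) - Z₀ᴴ * S * Z₀‖ < 1 := by
  have hZAu : IsUnit ZA := ⟨⟨ZA, ZAᴴ * A, mul_eq_one_comm.mp hZA, hZA⟩, rfl⟩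
  have hZCu : IsUnit ZC := ⟨⟨ZC, ZCᴴ * C, mul_eq_one_comm.mp hZC, hZC⟩, rfl⟩
  have hZu : IsUnit Z₀ := by
    rw [Matrix.isUnit_iff_isUnit_det, hZ₀, Matrix.det_fromBlocks_zero₂₁]
    exact ((Matrix.isUnit_iff_isUnit_det _).mp hZAu).mul ((Matrix.isUnit_iff_isUnit_det _).mp hZCu)
  set M : Matrix (m ⊕ n) (m ⊕ n) ℂ := Z₀ᴴ * S * Z₀ with hMdef
  have hMpd : M.PosDef := my_posDef_conj hSpd hZu
  have hZA' : ZAᴴ * (A * ZA) = 1 := by rw [← Matrix.mul_assoc]; exact hZA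
  have hZC' : ZCᴴ * (C * ZC) = 1 := by rw [← Matrix.mul_assoc]; exact hZC
  have hM : M = fromBlocks 1 (ZAᴴ * (B * ZC)) (ZCᴴ * (Bᴴ * ZA)) 1 := by
    rw [hMdef, hS, hZ₀]
    simp [fromBlocks_conjTranspose, fromBlocks_multiply, Matrix.mul_assoc, hZA', hZC']
  set J : Matrix (m ⊕ n) (m ⊕ n) ℂ := fromBlocks 1 0 0 (-1) with hJdef
  have hJH : Jᴴ = J := by simp [hJdef, fromBlocks_conjTranspose]
  have hJJ : J * J = 1 := by
    rw [hJdef, fromBlocks_multiply]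
    simp [fromBlocks_one]
  have hJu : IsUnit J := ⟨⟨J, J, hJJ, hJJ⟩, rfl⟩
  have e2 : (1 : Matrix (m ⊕ n) (m ⊕ n) ℂ) + (1 - M)
      = fromBlocks 1 (-(ZAᴴ * (B * ZC))) (-(ZCᴴ * (Bᴴ * ZA))) 1 := by
    rw [hM, ← fromBlocks_one (l := m) (m := n), sub_eq_add_neg, fromBlocks_neg,
      fromBlocks_add, fromBlocks_add]
    norm_num
  have hconj : Jᴴ * M * J = 1 + (1 - M) := by
    rw [e2, hJH, hJdef, hM, fromBlocks_multiply, fromBlocks_multiply]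
    simp
  have h2 : ((1 : Matrix (m ⊕ n) (m ⊕ n) ℂ) + (1 - M)).PosDef := by
    rw [← hconj]; exact my_posDef_conj hMpd hJu
  have h1 : ((1 : Matrix (m ⊕ n) (m ⊕ n) ℂ) - (1 - M)).PosDef := by
    rw [sub_sub_cancel]; exact hMpd
  exact my_norm_lt_one ((Matrix.isHermitian_one).sub hMpd.1) h1 h2
end

section
/- Let S be a Hermitian positive definite matrix partitioned as S = [[A, B],[B*, C]], let Z_A, Z_C be inverse factors of A and C (i.e., Z_A* A Z_A = I, Z_C* C Z_C = I), and let Z₀ = diag(Z_A, Z_C). Then ‖I - Z₀* S Z₀‖₂ ≤ 1 - λ_min(S)/λ_max(S). -/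
open Matrix
open scoped Matrix.Norms.L2Operator ComplexOrder

lemma diag_norm_le {n : Type*} [Fintype n] [DecidableEq n] (d : n → ℂ) (c : ℝ)
    (hc : 0 ≤ c) (h : ∀ i, ‖d i‖ ≤ c) : ‖diagonal d‖ ≤ c := by
  rw [Matrix.l2_opNorm_def]
  refine ContinuousLinearMap.opNorm_le_bound _ hc fun x => ?_
  simp only [LinearEquiv.trans_apply, LinearMap.coe_toContinuousLinearMap',
    toEuclideanLin_apply]
  rw [EuclideanSpace.norm_eq, EuclideanSpace.norm_eq]
  rw [← Real.sqrt_sq hc, ← Real.sqrt_mul (by positivity)]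
  apply Real.sqrt_le_sqrt
  rw [Finset.mul_sum]
  apply Finset.sum_le_sum
  intro i _
  simp only [Matrix.mulVec_diagonal]
  have h2 : ‖d i‖^2 ≤ c^2 := by nlinarith [norm_nonneg (d i), h i]
  rw [norm_mul, mul_pow]
  exact mul_le_mul_of_nonneg_right h2 (by positivity)

lemma herm_norm_le {n : Type*} [Fintype n] [DecidableEq n] [Nonempty n]
    {M : Matrix n n ℂ} (hM : M.IsHermitian) (c : ℝ) (hc : 0 ≤ c)
    (h : ∀ i, |hM.eigenvalues i| ≤ c) : ‖M‖ ≤ c := by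
  have hd : ‖diagonal (RCLike.ofReal ∘ hM.eigenvalues : n → ℂ)‖ ≤ c := by
    refine diag_norm_le _ c hc fun i => ?_
    simpa using h i
  calc ‖M‖ = ‖(hM.eigenvectorUnitary : Matrix n n ℂ) *
        (diagonal (RCLike.ofReal ∘ hM.eigenvalues) * (star (hM.eigenvectorUnitary : Matrix n n ℂ)))‖ := by
        rw [← mul_assoc, ← Unitary.conjStarAlgAut_apply (S := ℂ), ← hM.spectral_theorem]
    _ ≤ ‖(hM.eigenvectorUnitary : Matrix n n ℂ)‖ *
        (‖diagonal (RCLike.ofReal ∘ hM.eigenvalues : n → ℂ)‖ * ‖star (hM.eigenvectorUnitary : Matrix n n ℂ)‖) := by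
        refine (Matrix.l2_opNorm_mul _ _).trans ?_
        exact mul_le_mul_of_nonneg_left (Matrix.l2_opNorm_mul _ _) (norm_nonneg _)
    _ ≤ c := by
        rw [Matrix.star_eq_conjTranspose, Matrix.l2_opNorm_conjTranspose,
          CStarRing.norm_coe_unitary hM.eigenvectorUnitary]
        simpa using hd

lemma eig_abs_le {n : Type*} [Fintype n] [DecidableEq n]
    {M : Matrix n n ℂ} (hM : M.IsHermitian) (c : ℝ)
    (h : ∀ x : n → ℂ, |Complex.re (star x ⬝ᵥ (M *ᵥ x))| ≤ c * Complex.re (star x ⬝ᵥ x)) :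
    ∀ i, |hM.eigenvalues i| ≤ c := by
  intro i
  set v : n → ℂ := ⇑(hM.eigenvectorBasis i) with hv_def
  have h1 : (star v ⬝ᵥ v) = (inner ℂ (hM.eigenvectorBasis i) (hM.eigenvectorBasis i) : ℂ) := by
    rw [EuclideanSpace.inner_eq_star_dotProduct, dotProduct_comm]
  have hv : Complex.re (star v ⬝ᵥ v) = 1 := by
    rw [h1, inner_self_eq_norm_sq_to_K, hM.eigenvectorBasis.orthonormal.1 i]
    norm_num
  have h2 := h v
  rw [hv, mul_one] at h2
  have h3 : hM.eigenvalues i = Complex.re (star v ⬝ᵥ (M *ᵥ v)) := by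
    simpa [RCLike.re_to_complex] using hM.eigenvalues_eq i
  rw [← h3] at h2
  exact h2

lemma rayleigh_lower {n : Type*} [Fintype n] [DecidableEq n]
    {M : Matrix n n ℂ} (hM : M.IsHermitian) (a : ℝ)
    (h : ∀ i, a ≤ hM.eigenvalues i) (x : n → ℂ) :
    a * Complex.re (star x ⬝ᵥ x) ≤ Complex.re (star x ⬝ᵥ (M *ᵥ x)) := by
  have hpsd : (M - (a : ℂ) • 1).PosSemidef := by
    have hdecomp : M - (a : ℂ) • 1 =
        (hM.eigenvectorUnitary : Matrix n n ℂ) *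
          diagonal (fun i => ((hM.eigenvalues i - a : ℝ) : ℂ)) *
          (hM.eigenvectorUnitary : Matrix n n ℂ)ᴴ := by
      conv_lhs => rw [hM.spectral_theorem]
      rw [← Matrix.star_eq_conjTranspose]
      have hU : (hM.eigenvectorUnitary : Matrix n n ℂ) * star (hM.eigenvectorUnitary : Matrix n n ℂ) = 1 :=
        Unitary.mul_star_self_of_mem (hM.eigenvectorUnitary).2
      calc (hM.eigenvectorUnitary : Matrix n n ℂ) * diagonal (RCLike.ofReal ∘ hM.eigenvalues) *
            star (hM.eigenvectorUnitary : Matrix n n ℂ) - (a : ℂ) • 1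
          = (hM.eigenvectorUnitary : Matrix n n ℂ) *
              (diagonal (RCLike.ofReal ∘ hM.eigenvalues) - (a:ℂ) • 1) *
              star (hM.eigenvectorUnitary : Matrix n n ℂ) := by
            rw [Matrix.mul_sub, Matrix.sub_mul]
            congr 1
            rw [Matrix.mul_smul, Matrix.smul_mul, mul_one, hU]
          _ = _ := by
            congr 2
            ext i j
            by_cases hij : i = j
            · subst hij
              simp [Matrix.diagonal_apply_eq, Matrix.one_apply_eq, Complex.ofReal_sub]
            · simp [Matrix.diagonal_apply_ne _ hij, Matrix.one_apply_ne hij]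
    rw [hdecomp]
    have hdpsd : (diagonal (fun i => ((hM.eigenvalues i - a : ℝ) : ℂ)) : Matrix n n ℂ).PosSemidef := by
      rw [Matrix.posSemidef_diagonal_iff]
      intro i
      rw [Complex.zero_le_real]
      linarith [h i]
    simpa using hdpsd.mul_mul_conjTranspose_same (hM.eigenvectorUnitary : Matrix n n ℂ)
  have := hpsd.re_dotProduct_nonneg x
  have hexp : star x ⬝ᵥ ((M - (a:ℂ) • 1) *ᵥ x) = star x ⬝ᵥ (M *ᵥ x) - (a:ℂ) * (star x ⬝ᵥ x) := by
    rw [Matrix.sub_mulVec, dotProduct_sub, Matrix.smul_mulVec, Matrix.one_mulVec,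
      dotProduct_smul]
    rfl
  rw [hexp] at this
  simp only [RCLike.re_to_complex, Complex.sub_re, Complex.mul_re, Complex.ofReal_re,
    Complex.ofReal_im, zero_mul, sub_zero] at this
  linarith

lemma rayleigh_upper {n : Type*} [Fintype n] [DecidableEq n]
    {M : Matrix n n ℂ} (hM : M.IsHermitian) (b : ℝ)
    (h : ∀ i, hM.eigenvalues i ≤ b) (x : n → ℂ) :
    Complex.re (star x ⬝ᵥ (M *ᵥ x)) ≤ b * Complex.re (star x ⬝ᵥ x) := by
  have hpsd : ((b : ℂ) • 1 - M).PosSemidef := by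
    have hdecomp : (b : ℂ) • 1 - M =
        (hM.eigenvectorUnitary : Matrix n n ℂ) *
          diagonal (fun i => ((b - hM.eigenvalues i : ℝ) : ℂ)) *
          (hM.eigenvectorUnitary : Matrix n n ℂ)ᴴ := by
      conv_lhs => rw [hM.spectral_theorem]
      rw [← Matrix.star_eq_conjTranspose]
      have hU : (hM.eigenvectorUnitary : Matrix n n ℂ) * star (hM.eigenvectorUnitary : Matrix n n ℂ) = 1 :=
        Unitary.mul_star_self_of_mem (hM.eigenvectorUnitary).2
      calc (b : ℂ) • 1 - (hM.eigenvectorUnitary : Matrix n n ℂ) *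
            diagonal (RCLike.ofReal ∘ hM.eigenvalues) * star (hM.eigenvectorUnitary : Matrix n n ℂ)
          = (hM.eigenvectorUnitary : Matrix n n ℂ) *
              ((b:ℂ) • 1 - diagonal (RCLike.ofReal ∘ hM.eigenvalues)) *
              star (hM.eigenvectorUnitary : Matrix n n ℂ) := by
            rw [Matrix.mul_sub, Matrix.sub_mul]
            congr 1
            rw [Matrix.mul_smul, Matrix.smul_mul, mul_one, hU]
          _ = _ := by
            congr 2
            ext i j
            by_cases hij : i = j
            · subst hij
              simp [Matrix.diagonal_apply_eq, Matrix.one_apply_eq, Complex.ofReal_sub]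
            · simp [Matrix.diagonal_apply_ne _ hij, Matrix.one_apply_ne hij]
    rw [hdecomp]
    have hdpsd : (diagonal (fun i => ((b - hM.eigenvalues i : ℝ) : ℂ)) : Matrix n n ℂ).PosSemidef := by
      rw [Matrix.posSemidef_diagonal_iff]
      intro i
      rw [Complex.zero_le_real]
      linarith [h i]
    simpa using hdpsd.mul_mul_conjTranspose_same (hM.eigenvectorUnitary : Matrix n n ℂ)
  have := hpsd.re_dotProduct_nonneg x
  have hexp : star x ⬝ᵥ (((b:ℂ) • 1 - M) *ᵥ x) = (b:ℂ) * (star x ⬝ᵥ x) - star x ⬝ᵥ (M *ᵥ x) := by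
    rw [Matrix.sub_mulVec, dotProduct_sub, Matrix.smul_mulVec, Matrix.one_mulVec,
      dotProduct_smul]
    rfl
  rw [hexp] at this
  simp only [RCLike.re_to_complex, Complex.sub_re, Complex.mul_re, Complex.ofReal_re,
    Complex.ofReal_im, zero_mul, sub_zero] at this
  linarith

lemma conj_quad {k : Type*} [Fintype k] (M N : Matrix k k ℂ) (x : k → ℂ) :
    star (N *ᵥ x) ⬝ᵥ (M *ᵥ (N *ᵥ x)) = star x ⬝ᵥ ((Nᴴ * M * N) *ᵥ x) := by
  rw [star_mulVec, mulVec_mulVec, ← dotProduct_mulVec, mulVec_mulVec, ← Matrix.mul_assoc]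

lemma key_real (a b n q : ℝ) (ha : 0 < a) (hab : a ≤ b) (hn : 0 ≤ n)
    (e2 : 2*a*n ≤ q*(a+b)) (e1 : q*(a+b) ≤ 2*b*n) :
    |n - q| ≤ (1 - a/b)*n := by
  have hb : 0 < b := lt_of_lt_of_le ha hab
  have h5 : 0 ≤ a*n*(b-a) := mul_nonneg (mul_nonneg ha.le hn) (by linarith)
  have W : a*n ≤ q*b := by nlinarith [mul_nonneg hb.le (show 0 ≤ q*(a+b) - 2*a*n by linarith)]
  have W2 : q*b ≤ 2*b*n - a*n := by
    nlinarith [mul_nonneg hb.le (show 0 ≤ 2*b*n - q*(a+b) by linarith)]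
  have h7 : a/b*n ≤ q := by rw [div_mul_eq_mul_div, div_le_iff₀ hb]; linarith
  have h8 : a/b*n ≤ 2*n - q := by rw [div_mul_eq_mul_div, div_le_iff₀ hb]; nlinarith
  rw [abs_le]
  constructor <;> nlinarith

theorem stmt_7 {m n : Type*} [Fintype m] [Fintype n] [DecidableEq m] [DecidableEq n]
    [Nonempty m] [Nonempty n]
    (A : Matrix m m ℂ) (B : Matrix m n ℂ) (C : Matrix n n ℂ)
    (ZA : Matrix m m ℂ) (ZC : Matrix n n ℂ)
    (S : Matrix (m ⊕ n) (m ⊕ n) ℂ)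
    (hS : S = Matrix.fromBlocks A B Bᴴ C)
    (hSpd : S.PosDef)
    (hZA : ZAᴴ * A * ZA = 1) (hZC : ZCᴴ * C * ZC = 1)
    (Z₀ : Matrix (m ⊕ n) (m ⊕ n) ℂ)
    (hZ₀ : Z₀ = Matrix.fromBlocks ZA 0 0 ZC) :
    ‖(1 : Matrix (m ⊕ n) (m ⊕ n) ℂ) - Z₀ᴴ * S * Z₀‖ ≤
      1 - (⨅ i, hSpd.isHermitian.eigenvalues i) / (⨆ i, hSpd.isHermitian.eigenvalues i) := by
  classical
  have hH : S.IsHermitian := hSpd.isHermitian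
  set a : ℝ := ⨅ i, hSpd.isHermitian.eigenvalues i with ha_def
  set b : ℝ := ⨆ i, hSpd.isHermitian.eigenvalues i with hb_def
  have ha_le : ∀ i, a ≤ hSpd.isHermitian.eigenvalues i := fun i =>
    ciInf_le (Finite.bddBelow_range _) i
  have hb_ge : ∀ i, hSpd.isHermitian.eigenvalues i ≤ b := fun i =>
    le_ciSup (Finite.bddAbove_range _) i
  have ha_pos : 0 < a := by
    obtain ⟨i₀, h0⟩ := Finite.exists_min hSpd.isHermitian.eigenvalues
    exact lt_of_lt_of_le (hSpd.eigenvalues_pos i₀) (le_ciInf h0)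
  have hab : a ≤ b := by
    obtain ⟨i⟩ := (inferInstance : Nonempty (m ⊕ n))
    exact (ha_le i).trans (hb_ge i)
  have hb_pos : 0 < b := lt_of_lt_of_le ha_pos hab
  have hc : 0 ≤ 1 - a / b := by
    rw [sub_nonneg]
    exact div_le_one_of_le₀ hab hb_pos.le
  set T : Matrix (m ⊕ n) (m ⊕ n) ℂ := Z₀ᴴ * S * Z₀ with hT_def
  have hT : T.IsHermitian := Matrix.isHermitian_conjTranspose_mul_mul Z₀ hH
  have hM : ((1 : Matrix (m ⊕ n) (m ⊕ n) ℂ) - T).IsHermitian :=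
    Matrix.isHermitian_one.sub hT
  refine herm_norm_le hM _ hc (eig_abs_le hM _ fun x => ?_)
  -- block structure of T
  set F : Matrix m n ℂ := ZAᴴ * B * ZC with hF_def
  have hZA' : ZAᴴ * (A * ZA) = 1 := by rw [← Matrix.mul_assoc]; exact hZA
  have hZC' : ZCᴴ * (C * ZC) = 1 := by rw [← Matrix.mul_assoc]; exact hZC
  have hTb : T = fromBlocks 1 F Fᴴ 1 := by
    rw [hT_def, hS, hZ₀, fromBlocks_conjTranspose, fromBlocks_multiply, fromBlocks_multiply]
    simp [hF_def, hZA', hZC', Matrix.mul_assoc]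
  set J : Matrix (m ⊕ n) (m ⊕ n) ℂ := fromBlocks 1 0 0 (-1) with hJ_def
  have hJH : Jᴴ = J := by
    rw [hJ_def, fromBlocks_conjTranspose]
    simp
  have hJJ : J * J = 1 := by
    rw [hJ_def, fromBlocks_multiply, ← fromBlocks_one]
    simp
  have hJTJ : J * T * J = (1 + 1) - T := by
    rw [hTb, hJ_def, fromBlocks_multiply, fromBlocks_multiply]
    have hrhs : ((1 : Matrix (m ⊕ n) (m ⊕ n) ℂ) + 1) - fromBlocks 1 F Fᴴ 1
        = fromBlocks 1 (-F) (-Fᴴ) 1 := by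
      rw [← fromBlocks_one, sub_eq_add_neg, fromBlocks_neg, fromBlocks_add, fromBlocks_add]
      norm_num
    rw [hrhs]
    simp
  have hZJ : Z₀ * J = J * Z₀ := by
    rw [hZ₀, hJ_def, fromBlocks_multiply, fromBlocks_multiply]
    simp
  -- quadratic quantities
  set y : (m ⊕ n) → ℂ := Z₀ *ᵥ x with hy_def
  have cq1 : star x ⬝ᵥ (T *ᵥ x) = star y ⬝ᵥ (S *ᵥ y) := by
    rw [hy_def, conj_quad, hT_def]
  have cq3 : Z₀ *ᵥ (J *ᵥ x) = J *ᵥ y := by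
    rw [hy_def, mulVec_mulVec, mulVec_mulVec, hZJ]
  have cq4 : star (J *ᵥ y) ⬝ᵥ (J *ᵥ y) = star y ⬝ᵥ y := by
    have h0 := conj_quad 1 J y
    rw [Matrix.one_mulVec, hJH, Matrix.mul_one, hJJ, Matrix.one_mulVec] at h0
    exact h0
  have cq5 : star (J *ᵥ y) ⬝ᵥ (S *ᵥ (J *ᵥ y)) =
      (star x ⬝ᵥ x) + (star x ⬝ᵥ x) - star x ⬝ᵥ (T *ᵥ x) := by
    rw [← cq3, conj_quad, ← hT_def]
    have h0 := conj_quad T J x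
    rw [hJH] at h0
    rw [h0, hJTJ, Matrix.sub_mulVec, Matrix.add_mulVec, Matrix.one_mulVec, dotProduct_sub,
      dotProduct_add]
  -- real quantities
  set n₀ : ℝ := Complex.re (star x ⬝ᵥ x) with hn0_def
  set q : ℝ := Complex.re (star x ⬝ᵥ (T *ᵥ x)) with hq_def
  set t : ℝ := Complex.re (star y ⬝ᵥ y) with ht_def
  have hn0 : 0 ≤ n₀ := by
    have h0 := dotProduct_star_self_nonneg x
    simpa [Complex.le_def] using (Complex.le_def.mp h0).1
  have h1 : a * t ≤ q := by
    rw [hq_def, cq1, ht_def]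
    exact rayleigh_lower hSpd.isHermitian a ha_le y
  have h2 : q ≤ b * t := by
    rw [hq_def, cq1, ht_def]
    exact rayleigh_upper hSpd.isHermitian b hb_ge y
  have h3 : a * t ≤ 2 * n₀ - q := by
    have h0 := rayleigh_lower hSpd.isHermitian a ha_le (J *ᵥ y)
    rw [cq4, cq5] at h0
    simp only [Complex.sub_re, Complex.add_re] at h0
    rw [ht_def, hn0_def, hq_def]
    linarith
  have h4 : 2 * n₀ - q ≤ b * t := by
    have h0 := rayleigh_upper hSpd.isHermitian b hb_ge (J *ᵥ y)
    rw [cq4, cq5] at h0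
    simp only [Complex.sub_re, Complex.add_re] at h0
    rw [ht_def, hn0_def, hq_def]
    linarith
  have e2 : 2*a*n₀ ≤ q*(a+b) := by
    nlinarith [mul_le_mul_of_nonneg_left h4 ha_pos.le, mul_le_mul_of_nonneg_left h1 hb_pos.le]
  have e1 : q*(a+b) ≤ 2*b*n₀ := by
    nlinarith [mul_le_mul_of_nonneg_left h3 hb_pos.le, mul_le_mul_of_nonneg_left h2 ha_pos.le]
  have hkey := key_real a b n₀ q ha_pos hab hn0 e2 e1
  have hgoal : Complex.re (star x ⬝ᵥ (((1 : Matrix (m ⊕ n) (m ⊕ n) ℂ) - T) *ᵥ x)) = n₀ - q := by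
    rw [Matrix.sub_mulVec, Matrix.one_mulVec, dotProduct_sub, Complex.sub_re, hn0_def, hq_def]
  rw [hgoal]
  exact hkey
end

section
/- Let S be Hermitian positive definite and Z₀ satisfy ‖I - Z₀* S Z₀‖₂ < 1. Define δᵢ = I - Zᵢ* S Zᵢ and Zᵢ₊₁ = Zᵢ ∑_{k=0}^{m} b_k δᵢᵏ where b₀ = 1 and b_k = ((2k-1)/(2k)) b_{k-1} for k ≥ 1. Then ‖δ_{i+1}‖₂ ≤ ‖δᵢ‖₂^{m+1}, and in particular δᵢ → 0 as i → ∞. -/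
open Matrix Filter
open scoped Matrix.Norms.L2Operator ComplexOrder

open Finset Polynomial


/-- reflection identity: the weighted convolution sum. -/
private lemma convT (b : ℕ → ℝ) (k : ℕ) :
    ∑ i ∈ Finset.range (k+1), (2*(i:ℝ)) * (b i * b (k - i))
      = k * ∑ i ∈ Finset.range (k+1), b i * b (k - i) := by
  have h := Finset.sum_range_reflect (fun i => (2*(i:ℝ)) * (b i * b (k - i))) (k+1)
  simp only [Nat.add_sub_cancel] at h
  have h2 : ∀ j ∈ Finset.range (k+1),
      (2*(((k - j : ℕ)):ℝ)) * (b (k - j) * b (k - (k - j)))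
        = (2*(k:ℝ) - 2*j) * (b j * b (k - j)) := by
    intro j hj
    have hjk : j ≤ k := Nat.lt_succ_iff.mp (Finset.mem_range.mp hj)
    rw [Nat.sub_sub_self hjk, Nat.cast_sub hjk]
    ring
  rw [Finset.sum_congr rfl h2] at h
  have h3 : ∑ j ∈ Finset.range (k+1),
      ((2*(k:ℝ) - 2*j) * (b j * b (k - j)) + (2*(j:ℝ)) * (b j * b (k - j)))
      = 2 * (k:ℝ) * ∑ i ∈ Finset.range (k+1), b i * b (k - i) := by
    rw [Finset.mul_sum]
    exact Finset.sum_congr rfl fun j _ => by ring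
  rw [Finset.sum_add_distrib, h] at h3
  linarith

private lemma conv_one (b : ℕ → ℝ) (hb0 : b 0 = 1)
    (hb : ∀ k : ℕ, 1 ≤ k → b k = ((2 * k - 1 : ℝ) / (2 * k)) * b (k - 1)) :
    ∀ k, ∑ i ∈ Finset.range (k+1), b i * b (k - i) = 1 := by
  intro k
  induction k with
  | zero => simp [hb0]
  | succ k ih =>
    have hrec : ∀ i : ℕ, (2*((i:ℝ)+1)) * b (i+1) = (2*(i:ℝ)+1) * b i := by
      intro i
      have h := hb (i+1) (Nat.le_add_left 1 i)
      simp only [Nat.add_sub_cancel] at h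
      rw [h]
      have hne : (2*((i:ℝ)+1)) ≠ 0 := by positivity
      push_cast
      rw [← mul_assoc, mul_comm (2*((i:ℝ)+1)), div_mul_cancel₀ _ hne]
      ring
    have hT1 := convT b (k+1)
    have hT0 := convT b k
    have hshift : ∑ i ∈ Finset.range (k+1+1), (2*(i:ℝ)) * (b i * b (k+1-i))
        = ∑ i ∈ Finset.range (k+1), (2*((i:ℝ)+1)) * (b (i+1) * b (k-i)) := by
      rw [Finset.sum_range_succ']
      push_cast
      simp
    have hval : ∑ i ∈ Finset.range (k+1), (2*((i:ℝ)+1)) * (b (i+1) * b (k-i))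
        = ∑ i ∈ Finset.range (k+1), ((2*(i:ℝ)) * (b i * b (k-i)) + b i * b (k-i)) := by
      refine Finset.sum_congr rfl fun i _ => ?_
      calc (2*((i:ℝ)+1)) * (b (i+1) * b (k-i))
          = ((2*((i:ℝ)+1)) * b (i+1)) * b (k-i) := by ring
        _ = ((2*(i:ℝ)+1) * b i) * b (k-i) := by rw [hrec i]
        _ = _ := by ring
    rw [Finset.sum_add_distrib, hT0, ih] at hval
    rw [hshift, hval] at hT1
    have hne : ((k:ℝ)+1) ≠ 0 := by positivity
    have : ((k:ℝ)+1) * ∑ i ∈ Finset.range (k+1+1), b i * b (k+1-i) = ((k:ℝ)+1) * 1 := by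
      push_cast at hT1 ⊢
      linarith
    exact mul_left_cancel₀ hne this

private lemma b_nonneg (b : ℕ → ℝ) (hb0 : b 0 = 1)
    (hb : ∀ k : ℕ, 1 ≤ k → b k = ((2 * k - 1 : ℝ) / (2 * k)) * b (k - 1)) :
    ∀ k, 0 ≤ b k := by
  intro k
  induction k with
  | zero => rw [hb0]; norm_num
  | succ k ih =>
    have h := hb (k+1) (Nat.le_add_left 1 k)
    simp only [Nat.add_sub_cancel] at h
    rw [h]
    have h1 : (0:ℝ) ≤ (2 * (k+1) - 1) / (2 * (k+1)) := by
      apply div_nonneg <;> [push_cast; push_cast] <;> linarith [Nat.cast_nonneg (α := ℝ) k]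
    push_cast at h1 ⊢
    exact mul_nonneg h1 ih

private lemma b_anti (b : ℕ → ℝ) (hb0 : b 0 = 1)
    (hb : ∀ k : ℕ, 1 ≤ k → b k = ((2 * k - 1 : ℝ) / (2 * k)) * b (k - 1)) :
    ∀ k, b (k+1) ≤ b k := by
  intro k
  have h := hb (k+1) (Nat.le_add_left 1 k)
  simp only [Nat.add_sub_cancel] at h
  rw [h]
  have hnn := b_nonneg b hb0 hb k
  have h1 : (2 * ((k:ℝ)+1) - 1) / (2 * ((k:ℝ)+1)) ≤ 1 := by
    rw [div_le_one (by positivity)]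
    linarith
  have h0 : (0:ℝ) ≤ (2 * ((k:ℝ)+1) - 1) / (2 * ((k:ℝ)+1)) := by
    apply div_nonneg <;> linarith [Nat.cast_nonneg (α := ℝ) k]
  push_cast
  nlinarith


private def bb (b : ℕ → ℝ) (m : ℕ) : ℕ → ℝ := fun k => if k ≤ m then b k else 0

private def cc (b : ℕ → ℝ) (m : ℕ) : ℕ → ℝ :=
  fun s => ∑ i ∈ Finset.range (s+1), bb b m i * bb b m (s - i)

private lemma bb_nonneg (b : ℕ → ℝ) (m : ℕ) (h : ∀ k, 0 ≤ b k) (k : ℕ) :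
    0 ≤ bb b m k := by
  unfold bb; split <;> simp [h]

private lemma bb_anti (b : ℕ → ℝ) (m : ℕ) (h : ∀ k, 0 ≤ b k)
    (ha : ∀ k, b (k+1) ≤ b k) (k : ℕ) : bb b m (k+1) ≤ bb b m k := by
  unfold bb
  by_cases h1 : k + 1 ≤ m
  · rw [if_pos h1, if_pos (by omega)]; exact ha k
  · rw [if_neg h1]
    split <;> simp [h]

private lemma cc_eq_one (b : ℕ → ℝ) (m : ℕ)
    (hconv : ∀ k, ∑ i ∈ Finset.range (k+1), b i * b (k - i) = 1)
    {s : ℕ} (hs : s ≤ m) : cc b m s = 1 := by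
  unfold cc
  rw [← hconv s]
  refine Finset.sum_congr rfl fun i hi => ?_
  have hi' : i ≤ s := Nat.lt_succ_iff.mp (Finset.mem_range.mp hi)
  unfold bb
  rw [if_pos (by omega), if_pos (by omega)]

private lemma cc_anti (b : ℕ → ℝ) (m : ℕ) (h : ∀ k, 0 ≤ b k)
    (ha : ∀ k, b (k+1) ≤ b k) {s : ℕ} (hs : m ≤ s) :
    cc b m (s+1) ≤ cc b m s := by
  unfold cc
  rw [Finset.sum_range_succ]
  have h1 : bb b m (s+1) = 0 := by unfold bb; rw [if_neg (by omega)]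
  rw [h1, zero_mul, add_zero]
  refine Finset.sum_le_sum fun i hi => ?_
  have hi' : i ≤ s := Nat.lt_succ_iff.mp (Finset.mem_range.mp hi)
  have h2 : s + 1 - i = (s - i) + 1 := by omega
  rw [h2]
  exact mul_le_mul_of_nonneg_left (bb_anti b m h ha (s - i)) (bb_nonneg b m h i)

private lemma cc_top (b : ℕ → ℝ) (m : ℕ) : cc b m (2*m+1) = 0 := by
  unfold cc
  refine Finset.sum_eq_zero fun i hi => ?_
  unfold bb
  by_cases h1 : i ≤ m
  · rw [if_neg (show ¬ 2*m+1-i ≤ m by omega), mul_zero]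
  · rw [if_neg h1, zero_mul]


private lemma key_step {n : Type*} [Fintype n] [DecidableEq n]
    (m : ℕ) (hm : 1 ≤ m) (b : ℕ → ℝ)
    (hbb_nn : ∀ k, 0 ≤ bb b m k)
    (hbb_anti : ∀ k, bb b m (k+1) ≤ bb b m k)
    (hcc_one : ∀ s, s ≤ m → cc b m s = 1)
    (hcc_anti : ∀ s, m ≤ s → cc b m (s+1) ≤ cc b m s)
    (hcc_top : cc b m (2*m+1) = 0)
    (A : Matrix n n ℂ) (hAn : ‖A‖ ≤ 1) :
    ‖1 - (∑ k ∈ Finset.range (m+1), (b k : ℂ) • A ^ k) *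
        ((1 - A) * ∑ k ∈ Finset.range (m+1), (b k : ℂ) • A ^ k)‖ ≤ ‖A‖ ^ (m+1) := by
  classical
  set p : Matrix n n ℂ := ∑ k ∈ Finset.range (m+1), (b k : ℂ) • A ^ k with hp
  -- the polynomial
  set P : Polynomial ℝ := ∑ k ∈ Finset.range (m+1), Polynomial.monomial k (b k) with hP
  have hPco : ∀ j, P.coeff j = bb b m j := by
    intro j
    rw [hP, Polynomial.finset_sum_coeff]
    simp only [Polynomial.coeff_monomial]
    rw [Finset.sum_ite_eq' (Finset.range (m+1)) j (fun k => b k)]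
    unfold bb
    simp [Finset.mem_range, Nat.lt_succ_iff]
  have hPdeg : P.natDegree ≤ m := by
    rw [Polynomial.natDegree_le_iff_coeff_eq_zero]
    intro j hj
    rw [hPco]
    unfold bb
    rw [if_neg (by omega)]
  have hPPdeg : (P * P).natDegree < 2*m+1 := by
    have h := Polynomial.natDegree_mul_le (p := P) (q := P)
    omega
  have hPPco : ∀ s, (P*P).coeff s = cc b m s := by
    intro s
    rw [Polynomial.coeff_mul, Finset.Nat.sum_antidiagonal_eq_sum_range_succ_mk]
    unfold cc
    exact Finset.sum_congr rfl fun i _ => by rw [hPco, hPco]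
  -- p is the evaluation of P at A
  have hsmul : ∀ (r : ℝ) (M : Matrix n n ℂ), algebraMap ℝ (Matrix n n ℂ) r * M = (r : ℂ) • M := by
    intro r M
    rw [← Algebra.smul_def, ← algebraMap_smul ℂ r M, Complex.coe_algebraMap]
  have hpa : (Polynomial.aeval A) P = p := by
    rw [hP, map_sum, hp]
    refine Finset.sum_congr rfl fun k _ => ?_
    rw [Polynomial.aeval_monomial, hsmul]
  have hp2 : p * p = ∑ s ∈ Finset.range (2*m+1), ((cc b m s : ℝ) : ℂ) • A ^ s := by
    rw [← hpa, ← _root_.map_mul]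
    conv_lhs => rw [(P*P).as_sum_range' (2*m+1) hPPdeg]
    rw [map_sum]
    refine Finset.sum_congr rfl fun s _ => ?_
    rw [Polynomial.aeval_monomial, hsmul, hPPco]
  -- commutation
  have hcomm : Commute A p := by
    rw [hp]
    refine Commute.sum_right _ _ _ fun k _ => ?_
    exact ((Commute.refl A).pow_right k).smul_right _
  have hcomm1 : Commute (1 - A) p := ((Commute.one_left p).sub_left hcomm)
  have h1 : p * ((1 - A) * p) = (1 - A) * (p * p) := by
    rw [← mul_assoc, ← hcomm1.eq, mul_assoc]
  -- the g coefficients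
  set g : ℕ → ℝ := fun t => cc b m t - cc b m (t+1) with hg
  have hIco : ∀ s, s ≤ 2*m+1 → ∑ t ∈ Finset.Ico s (2*m+1), g t = cc b m s := by
    intro s hs
    rw [Finset.sum_Ico_eq_sum_range]
    have : ∀ j, g (s + j) = cc b m (s + j) - cc b m (s + (j+1)) := by
      intro j; rw [hg]; simp [Nat.add_assoc]
    rw [Finset.sum_congr rfl fun j _ => this j]
    rw [Finset.sum_range_sub' (fun j => cc b m (s + j))]
    rw [Nat.add_sub_cancel' hs, hcc_top]
    simp
  have hgnn : ∀ t, 0 ≤ g t := by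
    intro t
    rcases lt_or_ge t m with h | h
    · rw [hg]; simp only
      rw [hcc_one t (by omega), hcc_one (t+1) (by omega)]
      norm_num
    · rw [hg]; simp only
      linarith [hcc_anti t h]
  have hg0 : ∀ t, t < m → g t = 0 := by
    intro t ht
    rw [hg]; simp only
    rw [hcc_one t (by omega), hcc_one (t+1) (by omega)]
    ring
  have hgsum : ∑ t ∈ Finset.range (2*m+1), g t = 1 := by
    rw [← Nat.Ico_zero_eq_range, hIco 0 (by omega), hcc_one 0 (by omega)]
  -- swap the triangle sum
  have hswap : ∑ s ∈ Finset.range (2*m+1), ((cc b m s : ℝ) : ℂ) • A ^ s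
      = ∑ t ∈ Finset.range (2*m+1), ((g t : ℝ) : ℂ) • ∑ s ∈ Finset.range (t+1), A ^ s := by
    have := Finset.sum_Ico_Ico_comm 0 (2*m+1) (fun s t => ((g t : ℝ) : ℂ) • A ^ s)
    simp only [Nat.Ico_zero_eq_range] at this
    calc ∑ s ∈ Finset.range (2*m+1), ((cc b m s : ℝ) : ℂ) • A ^ s
        = ∑ s ∈ Finset.range (2*m+1), ∑ t ∈ Finset.Ico s (2*m+1), ((g t : ℝ) : ℂ) • A ^ s := by
          refine Finset.sum_congr rfl fun s hs => ?_
          rw [← Finset.sum_smul]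
          congr 1
          have hs' : s ≤ 2*m+1 := by
            have := Finset.mem_range.mp hs; omega
          rw [← hIco s hs']
          push_cast
          rfl
      _ = ∑ t ∈ Finset.range (2*m+1), ∑ s ∈ Finset.range (t+1), ((g t : ℝ) : ℂ) • A ^ s := by
          rw [this]
      _ = _ := by
          refine Finset.sum_congr rfl fun t ht => ?_
          rw [Finset.smul_sum]
  -- geometric sum
  have hgeom : ∀ t : ℕ, (1 - A) * (∑ s ∈ Finset.range (t+1), A ^ s) = 1 - A ^ (t+1) := by
    intro t
    rw [← neg_sub A 1, neg_mul, mul_geom_sum, neg_sub]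
  -- main identity
  have hmain : 1 - p * ((1 - A) * p)
      = ∑ t ∈ Finset.range (2*m+1), ((g t : ℝ) : ℂ) • A ^ (t+1) := by
    rw [h1, hp2, hswap, Finset.mul_sum]
    have h2 : ∀ t ∈ Finset.range (2*m+1),
        (1 - A) * (((g t : ℝ) : ℂ) • ∑ s ∈ Finset.range (t+1), A ^ s)
          = ((g t : ℝ) : ℂ) • (1 : Matrix n n ℂ) - ((g t : ℝ) : ℂ) • A ^ (t+1) := by
      intro t _
      rw [mul_smul_comm, hgeom t, smul_sub]
    rw [Finset.sum_congr rfl h2, Finset.sum_sub_distrib]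
    have h3 : ∑ t ∈ Finset.range (2*m+1), ((g t : ℝ) : ℂ) • (1 : Matrix n n ℂ)
        = (1 : Matrix n n ℂ) := by
      rw [← Finset.sum_smul]
      have : ∑ t ∈ Finset.range (2*m+1), ((g t : ℝ) : ℂ) = ((1 : ℝ) : ℂ) := by
        push_cast [← hgsum]
        rfl
      rw [this]
      simp
    rw [h3]
    abel
  rw [hmain]
  -- norm bound
  calc ‖∑ t ∈ Finset.range (2*m+1), ((g t : ℝ) : ℂ) • A ^ (t+1)‖
      ≤ ∑ t ∈ Finset.range (2*m+1), ‖((g t : ℝ) : ℂ) • A ^ (t+1)‖ :=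
        norm_sum_le _ _
    _ ≤ ∑ t ∈ Finset.range (2*m+1), g t * ‖A‖ ^ (m+1) := by
        refine Finset.sum_le_sum fun t ht => ?_
        rw [norm_smul]
        have hgt : ‖((g t : ℝ) : ℂ)‖ = g t := by
          rw [Complex.norm_real, Real.norm_eq_abs, abs_of_nonneg (hgnn t)]
        rw [hgt]
        rcases lt_or_ge t m with h | h
        · rw [hg0 t h]; simp
        · refine mul_le_mul_of_nonneg_left ?_ (hgnn t)
          calc ‖A ^ (t+1)‖ ≤ ‖A‖ ^ (t+1) := norm_pow_le' A (by omega)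
            _ ≤ ‖A‖ ^ (m+1) := pow_le_pow_of_le_one (norm_nonneg A) hAn (by omega)
    _ = ‖A‖ ^ (m+1) := by rw [← Finset.sum_mul, hgsum, one_mul]


theorem stmt_8 {n : Type*} [Fintype n] [DecidableEq n]
    (S : Matrix n n ℂ) (hSpd : S.PosDef)
    (m : ℕ) (hm : 1 ≤ m)
    (b : ℕ → ℝ) (hb0 : b 0 = 1)
    (hb : ∀ k : ℕ, 1 ≤ k → b k = ((2 * k - 1 : ℝ) / (2 * k)) * b (k - 1))
    (Z : ℕ → Matrix n n ℂ)
    (δ : ℕ → Matrix n n ℂ)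
    (hδ : ∀ i, δ i = 1 - (Z i)ᴴ * S * Z i)
    (hZ : ∀ i, Z (i + 1) = Z i * ∑ k ∈ Finset.range (m + 1), (b k : ℂ) • (δ i) ^ k)
    (hδ0 : ‖δ 0‖ < 1) :
    (∀ i, ‖δ (i + 1)‖ ≤ ‖δ i‖ ^ (m + 1)) ∧
      Tendsto δ atTop (nhds 0) := by
  classical
  have hS : Sᴴ = S := hSpd.1
  have hbnn := b_nonneg b hb0 hb
  have hba := b_anti b hb0 hb
  have hconv := conv_one b hb0 hb
  have hherm : ∀ i, (δ i)ᴴ = δ i := by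
    intro i
    rw [hδ i]
    simp [Matrix.conjTranspose_sub, Matrix.conjTranspose_mul, hS, Matrix.mul_assoc]
  have key : ∀ i, ‖δ i‖ ≤ 1 → ‖δ (i+1)‖ ≤ ‖δ i‖ ^ (m+1) := by
    intro i hle
    set p : Matrix n n ℂ := ∑ k ∈ Finset.range (m+1), (b k : ℂ) • (δ i) ^ k with hp
    have hpH : pᴴ = p := by
      rw [hp, Matrix.conjTranspose_sum]
      refine Finset.sum_congr rfl fun k _ => ?_
      rw [Matrix.conjTranspose_smul, Matrix.conjTranspose_pow, hherm i]
      simp [Complex.conj_ofReal]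
    have hZSZ : (Z i)ᴴ * S * Z i = 1 - δ i := by
      rw [hδ i, sub_sub_cancel]
    have hδ1 : δ (i+1) = 1 - p * ((1 - δ i) * p) := by
      rw [hδ (i+1), hZ i, ← hp, Matrix.conjTranspose_mul, hpH]
      have h2 : p * (Z i)ᴴ * S * (Z i * p) = p * (((Z i)ᴴ * S * Z i) * p) := by
        simp only [Matrix.mul_assoc]
      rw [h2, hZSZ]
    rw [hδ1]
    exact key_step m hm b (fun k => bb_nonneg b m hbnn k)
      (fun k => bb_anti b m hbnn hba k)
      (fun s hs => cc_eq_one b m hconv hs)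
      (fun s hs => cc_anti b m hbnn hba hs)
      (cc_top b m) (δ i) hle
  have hlt : ∀ i, ‖δ i‖ < 1 := by
    intro i
    induction i with
    | zero => exact hδ0
    | succ i ih =>
      calc ‖δ (i+1)‖ ≤ ‖δ i‖ ^ (m+1) := key i ih.le
        _ < 1 := pow_lt_one₀ (norm_nonneg _) ih (by omega)
  refine ⟨fun i => key i (hlt i).le, ?_⟩
  have hbound : ∀ i, ‖δ i‖ ≤ ‖δ 0‖ ^ (i+1) := by
    intro i
    induction i with
    | zero => simp
    | succ i ih =>
      calc ‖δ (i+1)‖ ≤ ‖δ i‖ ^ (m+1) := key i (hlt i).le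
        _ ≤ ‖δ i‖ ^ 2 := pow_le_pow_of_le_one (norm_nonneg _) (hlt i).le (by omega)
        _ ≤ (‖δ 0‖ ^ (i+1)) ^ 2 := pow_le_pow_left₀ (norm_nonneg _) ih 2
        _ = ‖δ 0‖ ^ ((i+1)*2) := by rw [← pow_mul]
        _ ≤ ‖δ 0‖ ^ (i+2) := pow_le_pow_of_le_one (norm_nonneg _) hδ0.le (by omega)
  rw [tendsto_zero_iff_norm_tendsto_zero]
  have hgeo : Tendsto (fun i : ℕ => ‖δ 0‖ ^ (i+1)) atTop (nhds 0) :=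
    (tendsto_pow_atTop_nhds_zero_of_lt_one (norm_nonneg _) hδ0).comp
      (tendsto_add_atTop_nat 1)
  exact squeeze_zero (fun i => norm_nonneg _) hbound hgeo
end

section
/- Let S be Hermitian positive definite with eigenvalues in [λ_min, λ_max] and set c = √(2/(λ_min + λ_max)) and Z₀ = cI. Then ‖I - Z₀* S Z₀‖₂ = (λ_max - λ_min)/(λ_max + λ_min) < 1, and this choice of c minimizes ‖I - c² S‖₂ over all real c. -/
open Matrix
open scoped Matrix.Norms.L2Operator ComplexOrder

noncomputable instance {n : Type*} [Fintype n] [DecidableEq n] :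
    CStarAlgebra (Matrix n n ℂ) := Matrix.instCStarAlgebra

lemma aux_norm {n : Type*} [Fintype n] [DecidableEq n] [Nonempty n]
    (U : Matrix.unitaryGroup n ℂ) (d : n → ℝ) :
    ‖(U : Matrix n n ℂ) * Matrix.diagonal (Complex.ofReal ∘ d) * star (U : Matrix n n ℂ)‖
      = ⨆ i, |d i| := by
  set A := (U : Matrix n n ℂ) * Matrix.diagonal (Complex.ofReal ∘ d) * star (U : Matrix n n ℂ)
    with hA
  have hsa : IsSelfAdjoint A := by
    have hd : star (Matrix.diagonal (Complex.ofReal ∘ d)) = Matrix.diagonal (Complex.ofReal ∘ d) := by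
      simp [Matrix.star_eq_conjTranspose, Matrix.diagonal_conjTranspose]
    show star A = A
    simp only [hA, StarMul.star_mul, star_star, hd, mul_assoc]
  have hspec : spectrum ℂ A = Set.range (fun i => (d i : ℂ)) := by
    rw [hA, Unitary.spectrum_star_right_conjugate, spectrum_diagonal]
    ext x; simp
  have h1 : (‖A‖₊ : ENNReal) = ⨆ i, (‖(d i : ℂ)‖₊ : ENNReal) := by
    rw [← hsa.spectralRadius_eq_nnnorm, spectralRadius, hspec, iSup_range]
  rw [← ENNReal.coe_iSup (Set.Finite.bddAbove (Set.finite_range _))] at h1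
  have h2 : ‖A‖₊ = ⨆ i, ‖(d i : ℂ)‖₊ := by exact_mod_cast h1
  have h3 : ‖A‖ = ((⨆ i, ‖(d i : ℂ)‖₊ : NNReal) : ℝ) := by
    rw [← h2]; rfl
  rw [h3, NNReal.coe_iSup]
  congr 1; funext i; simp [Complex.norm_real]

lemma aux_decomp {n : Type*} [Fintype n] [DecidableEq n]
    (S : Matrix n n ℂ) (hS : S.IsHermitian) (t : ℝ) :
    (1 : Matrix n n ℂ) - ((t : ℝ) : ℂ) • S =
      (hS.eigenvectorUnitary : Matrix n n ℂ) *
        Matrix.diagonal (Complex.ofReal ∘ (fun i => 1 - t * hS.eigenvalues i)) *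
        star (hS.eigenvectorUnitary : Matrix n n ℂ) := by
  set U := (hS.eigenvectorUnitary : Matrix n n ℂ)
  have hU : U * star U = 1 := Unitary.coe_mul_star_self _
  have hD : Matrix.diagonal (Complex.ofReal ∘ (fun i => 1 - t * hS.eigenvalues i)) =
      1 - (t : ℂ) • Matrix.diagonal (RCLike.ofReal ∘ hS.eigenvalues) := by
    ext i j
    by_cases h : i = j <;> simp [h, Matrix.one_apply, Matrix.diagonal]
  rw [hD, mul_sub, sub_mul, mul_one, hU, mul_smul_comm, smul_mul_assoc]
  conv_lhs => rw [hS.spectral_theorem]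
  rw [Unitary.conjStarAlgAut_apply]

theorem stmt_10 {n : Type*} [Fintype n] [DecidableEq n] [Nonempty n]
    (S : Matrix n n ℂ) (hSpd : S.PosDef)
    (lmin lmax : ℝ)
    (hmin : lmin = ⨅ i, hSpd.isHermitian.eigenvalues i)
    (hmax : lmax = ⨆ i, hSpd.isHermitian.eigenvalues i)
    (c : ℝ) (hc : c = Real.sqrt (2 / (lmin + lmax)))
    (Z₀ : Matrix n n ℂ) (hZ₀ : Z₀ = (c : ℂ) • 1) :
    ‖(1 : Matrix n n ℂ) - Z₀ᴴ * S * Z₀‖ = (lmax - lmin) / (lmax + lmin) ∧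
      (lmax - lmin) / (lmax + lmin) < 1 ∧
      ∀ c' : ℝ, ‖(1 : Matrix n n ℂ) - Z₀ᴴ * S * Z₀‖ ≤
        ‖(1 : Matrix n n ℂ) - ((c' ^ 2 : ℝ) : ℂ) • S‖ := by
  have hS := hSpd.isHermitian
  set eig := hS.eigenvalues with heig
  -- basic facts about eigenvalues
  have hpos : ∀ i, 0 < eig i := fun i => hSpd.eigenvalues_pos i
  have hlb : ∀ i, lmin ≤ eig i := fun i => hmin ▸ ciInf_le (Set.Finite.bddBelow (Set.finite_range _)) i
  have hub : ∀ i, eig i ≤ lmax := fun i => hmax ▸ le_ciSup (Set.Finite.bddAbove (Set.finite_range _)) i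
  obtain ⟨imin, himin⟩ : ∃ i, eig i = lmin := by
    obtain ⟨i, hi⟩ := Finite.exists_min eig
    exact ⟨i, le_antisymm (hmin ▸ le_ciInf hi) (hlb i)⟩
  obtain ⟨imax, himax⟩ : ∃ i, eig i = lmax := by
    obtain ⟨i, hi⟩ := Finite.exists_max eig
    exact ⟨i, le_antisymm (hub i) (hmax ▸ ciSup_le hi)⟩
  have hlm : 0 < lmin := himin ▸ hpos imin
  have hle : lmin ≤ lmax := himax ▸ hlb imax
  have hs : (0:ℝ) < lmin + lmax := by linarith
  have hs' : (0:ℝ) < lmax + lmin := by linarith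
  have hlmax : (0:ℝ) < lmax := by linarith
  have hc2 : c^2 = 2/(lmin+lmax) := by
    rw [hc, Real.sq_sqrt (by positivity)]
  have hZ : Z₀ᴴ * S * Z₀ = ((c^2 : ℝ) : ℂ) • S := by
    rw [hZ₀]
    simp only [Matrix.conjTranspose_smul, Matrix.conjTranspose_one, Complex.star_def,
      Complex.conj_ofReal, Matrix.smul_mul, Matrix.mul_smul, one_mul, mul_one, smul_smul]
    push_cast
    ring_nf
  have hnorm : ∀ t : ℝ, ‖(1 : Matrix n n ℂ) - ((t:ℝ):ℂ) • S‖ = ⨆ i, |1 - t * eig i| := by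
    intro t
    rw [aux_decomp S hS t, aux_norm]
  have bdd : ∀ f : n → ℝ, BddAbove (Set.range f) := fun f => Set.Finite.bddAbove (Set.finite_range f)
  have key : ∀ i, |1 - c^2 * eig i| ≤ (lmax - lmin)/(lmax + lmin) := by
    intro i
    have e : 1 - c^2 * eig i = (lmin + lmax - 2*eig i)/(lmax+lmin) := by
      have h2 : (2:ℝ)/(lmin+lmax)*eig i = 2*eig i/(lmax+lmin) := by
        rw [add_comm lmax lmin, div_mul_eq_mul_div]
      rw [hc2, h2, eq_div_iff hs'.ne', sub_mul, one_mul, div_mul_cancel₀ _ hs'.ne']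
      ring
    rw [e, abs_div, abs_of_pos hs']
    gcongr
    rw [abs_le]
    constructor <;> [linarith [hub i]; linarith [hlb i]]
  have hval : |1 - c^2 * eig imin| = (lmax - lmin)/(lmax + lmin) := by
    rw [himin, hc2]
    have e : (1:ℝ) - 2/(lmin+lmax) * lmin = (lmax - lmin)/(lmax+lmin) := by
      field_simp; ring
    rw [e, abs_of_nonneg (div_nonneg (by linarith) hs'.le)]
  have part1 : ‖(1 : Matrix n n ℂ) - Z₀ᴴ * S * Z₀‖ = (lmax - lmin) / (lmax + lmin) := by
    rw [hZ, hnorm (c^2)]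
    exact le_antisymm (ciSup_le key) (hval ▸ le_ciSup (f := fun i => |1 - c^2 * eig i|) (bdd _) imin)
  refine ⟨part1, by rw [div_lt_one hs']; linarith, ?_⟩
  intro c'
  set t := c'^2 with ht
  rw [part1, hnorm t]
  have h1 : |1 - t * lmin| ≤ ⨆ i, |1 - t * eig i| := himin ▸ le_ciSup (f := fun i => |1 - t * eig i|) (bdd _) imin
  have h2 : |1 - t * lmax| ≤ ⨆ i, |1 - t * eig i| := himax ▸ le_ciSup (f := fun i => |1 - t * eig i|) (bdd _) imax
  have ha : 1 - t * lmin ≤ |1 - t * lmin| := le_abs_self _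
  have hb : t * lmax - 1 ≤ |1 - t * lmax| := by
    have := neg_abs_le (1 - t * lmax); linarith
  rw [div_le_iff₀ hs']
  nlinarith [mul_le_mul_of_nonneg_left h1 hlmax.le, mul_le_mul_of_nonneg_left h2 hlm.le,
    mul_le_mul_of_nonneg_left ha hlmax.le, mul_le_mul_of_nonneg_left hb hlm.le]
end
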